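/- arXiv:2206.12625 — 2 statements merged into one kernel-verified Lean document; each statement's English description precedes it below -/
import Mathlib

section
/- Under the same hypotheses as the equivalence of the kinetic and macroscopic SIR formulations, the fluxes satisfy ∂_t J_S + λ_S² ∂_x S = -β J_S I - J_S/τ_S, ∂_t J_I + λ_I² ∂_x I = (λ_I/λ_S) β J_S I - γ J_I - J_I/τ_I, and ∂_t J_R + λ_R² ∂_x R = (λ_R/λ_I) γ J_I - J_R/τ_R. -/
/-- Kinetic two-velocity SIR system implies the macroscopic flux equations. -/
theorem stmt_1
    (D : Set ℝ) (hD : IsOpen D)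
    (β γ : ℝ → ℝ → ℝ)
    (hβ : Continuous fun p : ℝ × ℝ => β p.1 p.2)
    (hγ : Continuous fun p : ℝ × ℝ => γ p.1 p.2)
    (lS lI lR τS τI τR : ℝ)
    (hlS : 0 < lS) (hlI : 0 < lI) (hlR : 0 < lR)
    (hτS : 0 < τS) (hτI : 0 < τI) (hτR : 0 < τR)
    (Sp Sm Ip Im Rp Rm : ℝ → ℝ → ℝ)
    (Spx Spt Smx Smt Ipx Ipt Imx Imt Rpx Rpt Rmx Rmt : ℝ → ℝ → ℝ)
    (hSpd : ∀ x ∈ D, ∀ t > (0:ℝ),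
      HasDerivAt (fun y => Sp y t) (Spx x t) x ∧ HasDerivAt (fun s => Sp x s) (Spt x t) t)
    (hSmd : ∀ x ∈ D, ∀ t > (0:ℝ),
      HasDerivAt (fun y => Sm y t) (Smx x t) x ∧ HasDerivAt (fun s => Sm x s) (Smt x t) t)
    (hIpd : ∀ x ∈ D, ∀ t > (0:ℝ),
      HasDerivAt (fun y => Ip y t) (Ipx x t) x ∧ HasDerivAt (fun s => Ip x s) (Ipt x t) t)
    (hImd : ∀ x ∈ D, ∀ t > (0:ℝ),
      HasDerivAt (fun y => Im y t) (Imx x t) x ∧ HasDerivAt (fun s => Im x s) (Imt x t) t)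
    (hRpd : ∀ x ∈ D, ∀ t > (0:ℝ),
      HasDerivAt (fun y => Rp y t) (Rpx x t) x ∧ HasDerivAt (fun s => Rp x s) (Rpt x t) t)
    (hRmd : ∀ x ∈ D, ∀ t > (0:ℝ),
      HasDerivAt (fun y => Rm y t) (Rmx x t) x ∧ HasDerivAt (fun s => Rm x s) (Rmt x t) t)
    (eqSp : ∀ x ∈ D, ∀ t > (0:ℝ),
      Spt x t + lS * Spx x t =
        -(β x t) * Sp x t * (Ip x t + Im x t) - (1 / (2 * τS)) * (Sp x t - Sm x t))
    (eqSm : ∀ x ∈ D, ∀ t > (0:ℝ),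
      Smt x t - lS * Smx x t =
        -(β x t) * Sm x t * (Ip x t + Im x t) + (1 / (2 * τS)) * (Sp x t - Sm x t))
    (eqIp : ∀ x ∈ D, ∀ t > (0:ℝ),
      Ipt x t + lI * Ipx x t =
        β x t * Sp x t * (Ip x t + Im x t) - γ x t * Ip x t
          - (1 / (2 * τI)) * (Ip x t - Im x t))
    (eqIm : ∀ x ∈ D, ∀ t > (0:ℝ),
      Imt x t - lI * Imx x t =
        β x t * Sm x t * (Ip x t + Im x t) - γ x t * Im x t
          + (1 / (2 * τI)) * (Ip x t - Im x t))
    (eqRp : ∀ x ∈ D, ∀ t > (0:ℝ),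
      Rpt x t + lR * Rpx x t = γ x t * Ip x t - (1 / (2 * τR)) * (Rp x t - Rm x t))
    (eqRm : ∀ x ∈ D, ∀ t > (0:ℝ),
      Rmt x t - lR * Rmx x t = γ x t * Im x t + (1 / (2 * τR)) * (Rp x t - Rm x t)) :
    ∀ x ∈ D, ∀ t > (0:ℝ),
      lS * (Spt x t - Smt x t) + lS ^ 2 * (Spx x t + Smx x t) =
        -(β x t) * (lS * (Sp x t - Sm x t)) * (Ip x t + Im x t)
          - (lS * (Sp x t - Sm x t)) / τS ∧
      lI * (Ipt x t - Imt x t) + lI ^ 2 * (Ipx x t + Imx x t) =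
        (lI / lS) * β x t * (lS * (Sp x t - Sm x t)) * (Ip x t + Im x t)
          - γ x t * (lI * (Ip x t - Im x t)) - (lI * (Ip x t - Im x t)) / τI ∧
      lR * (Rpt x t - Rmt x t) + lR ^ 2 * (Rpx x t + Rmx x t) =
        (lR / lI) * γ x t * (lI * (Ip x t - Im x t)) - (lR * (Rp x t - Rm x t)) / τR := by
  intro x hx t ht
  have h1 := eqSp x hx t ht
  have h2 := eqSm x hx t ht
  have h3 := eqIp x hx t ht
  have h4 := eqIm x hx t ht
  have h5 := eqRp x hx t ht
  have h6 := eqRm x hx t ht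
  refine ⟨?_, ?_, ?_⟩
  · have hτ : τS ≠ 0 := hτS.ne'
    field_simp
    linear_combination (norm := (field_simp; ring)) τS * h1 - τS * h2
  · have hτ : τI ≠ 0 := hτI.ne'
    have hl : lS ≠ 0 := hlS.ne'
    field_simp
    linear_combination (norm := (field_simp; ring)) τI * h3 - τI * h4
  · have hτ : τR ≠ 0 := hτR.ne'
    have hl : lI ≠ 0 := hlI.ne'
    field_simp
    linear_combination (norm := (field_simp; ring)) τR * h5 - τR * h6
end

section
/- Suppose for each τ > 0 (with D = λ² τ fixed, so λ = sqrt(D/τ)) the functions (I^τ, J^τ) satisfy τ ∂_t J^τ + D ∂_x I^τ = τ λ β J_S I^τ /λ_S - τ γ J^τ - J^τ (the scaled flux equation for the infectious compartment with given bounded functions J_S, β, γ), and suppose I^τ → I, J^τ → J, ∂_x I^τ → ∂_x I, ∂_t J^τ → ∂_t J pointwise as τ → 0 with ∂_t J, J_S I^τ, and J^τ uniformly bounded. Then the limit satisfies Fick's law J = -D ∂_x I. -/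
open Filter Topology

/-- Diffusive limit of the flux equation for the infectious compartment: the limit
satisfies Fick's law `J = -D ∂ₓ I`. -/
theorem stmt_13
    (D : ℝ) (hD : 0 < D)
    (lamS : ℝ → ℝ)                      -- λ_S as a function of τ
    (β γ JS : ℝ → ℝ → ℝ)
    (hβb : ∃ M, ∀ x t : ℝ, |β x t| ≤ M)
    (hγb : ∃ M, ∀ x t : ℝ, |γ x t| ≤ M)
    (hratio : ∃ C, ∀ τ > (0:ℝ), |Real.sqrt (D / τ) / lamS τ| ≤ C)
    (Iτ Jτ : ℝ → ℝ → ℝ → ℝ)             -- families indexed by τ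
    (Ixτ Jtτ : ℝ → ℝ → ℝ → ℝ)           -- derivative witnesses
    (I J Ix Jt : ℝ → ℝ → ℝ)
    (hder : ∀ τ > (0:ℝ), ∀ x : ℝ, ∀ t > (0:ℝ),
      HasDerivAt (fun y => Iτ τ y t) (Ixτ τ x t) x ∧
      HasDerivAt (fun s => Jτ τ x s) (Jtτ τ x t) t)
    (heq : ∀ τ > (0:ℝ), ∀ x : ℝ, ∀ t > (0:ℝ),
      τ * Jtτ τ x t + D * Ixτ τ x t =
        τ * (Real.sqrt (D / τ) / lamS τ) * β x t * JS x t * Iτ τ x t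
          - τ * γ x t * Jτ τ x t - Jτ τ x t)
    (hIconv : ∀ x : ℝ, ∀ t > (0:ℝ),
      Tendsto (fun τ => Iτ τ x t) (nhdsWithin 0 (Set.Ioi 0)) (nhds (I x t)))
    (hJconv : ∀ x : ℝ, ∀ t > (0:ℝ),
      Tendsto (fun τ => Jτ τ x t) (nhdsWithin 0 (Set.Ioi 0)) (nhds (J x t)))
    (hIxconv : ∀ x : ℝ, ∀ t > (0:ℝ),
      Tendsto (fun τ => Ixτ τ x t) (nhdsWithin 0 (Set.Ioi 0)) (nhds (Ix x t)))
    (hJtconv : ∀ x : ℝ, ∀ t > (0:ℝ),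
      Tendsto (fun τ => Jtτ τ x t) (nhdsWithin 0 (Set.Ioi 0)) (nhds (Jt x t)))
    (hJtbdd : ∃ M, ∀ x : ℝ, ∀ t > (0:ℝ), |Jt x t| ≤ M)
    (hJSIbdd : ∃ M, ∀ τ > (0:ℝ), ∀ x : ℝ, ∀ t > (0:ℝ), |JS x t * Iτ τ x t| ≤ M)
    (hJτbdd : ∃ M, ∀ τ > (0:ℝ), ∀ x : ℝ, ∀ t > (0:ℝ), |Jτ τ x t| ≤ M) :
    ∀ x : ℝ, ∀ t > (0:ℝ), J x t = -D * Ix x t := by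
  intro x t ht
  have l := nhdsWithin (0:ℝ) (Set.Ioi 0)
  obtain ⟨C, hC⟩ := hratio
  -- τ → 0 within Ioi 0
  have hτ0 : Tendsto (fun τ : ℝ => τ) (nhdsWithin 0 (Set.Ioi 0)) (nhds 0) :=
    tendsto_id.mono_left nhdsWithin_le_nhds
  -- first term: τ * r τ → 0
  have h1 : Tendsto (fun τ : ℝ => τ * (Real.sqrt (D / τ) / lamS τ))
      (nhdsWithin 0 (Set.Ioi 0)) (nhds 0) := by
    apply squeeze_zero_norm' (a := fun τ => |τ| * C)
    · filter_upwards [self_mem_nhdsWithin] with τ hτ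
      simp only [Real.norm_eq_abs, abs_mul]
      exact mul_le_mul_of_nonneg_left (hC τ hτ) (abs_nonneg _)
    · have := hτ0.abs.mul_const C
      simpa using this
  have hterm1 : Tendsto (fun τ : ℝ =>
      τ * (Real.sqrt (D / τ) / lamS τ) * β x t * JS x t * Iτ τ x t)
      (nhdsWithin 0 (Set.Ioi 0)) (nhds 0) := by
    have := ((h1.mul_const (β x t)).mul_const (JS x t)).mul (hIconv x t ht)
    simpa using this
  have hterm2 : Tendsto (fun τ : ℝ => τ * γ x t * Jτ τ x t)
      (nhdsWithin 0 (Set.Ioi 0)) (nhds 0) := by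
    have := (hτ0.mul_const (γ x t)).mul (hJconv x t ht)
    simpa using this
  have hterm3 : Tendsto (fun τ : ℝ => τ * Jtτ τ x t)
      (nhdsWithin 0 (Set.Ioi 0)) (nhds 0) := by
    have := hτ0.mul (hJtconv x t ht)
    simpa using this
  have hterm4 : Tendsto (fun τ : ℝ => D * Ixτ τ x t)
      (nhdsWithin 0 (Set.Ioi 0)) (nhds (D * Ix x t)) :=
    (hIxconv x t ht).const_mul D
  have hrhs : Tendsto (fun τ : ℝ =>
      τ * (Real.sqrt (D / τ) / lamS τ) * β x t * JS x t * Iτ τ x t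
        - τ * γ x t * Jτ τ x t - τ * Jtτ τ x t - D * Ixτ τ x t)
      (nhdsWithin 0 (Set.Ioi 0)) (nhds (-D * Ix x t)) := by
    have := ((hterm1.sub hterm2).sub hterm3).sub hterm4
    simpa using this
  have heq' : Tendsto (fun τ : ℝ => Jτ τ x t) (nhdsWithin 0 (Set.Ioi 0))
      (nhds (-D * Ix x t)) := by
    apply hrhs.congr'
    filter_upwards [self_mem_nhdsWithin] with τ hτ
    have h := heq τ hτ x t ht
    linarith
  exact tendsto_nhds_unique (hJconv x t ht) heq'
end
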